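/- If T is an invertible element of the algebra E of column-finite N×N matrices over F such that T⁻¹ M_∞(F) T = M_∞(F), then both T and T⁻¹ have finitely many nonzero entries in every row (i.e., T ∈ E₀). -/

import Mathlib

noncomputable section

/-- The algebra `E` of column-finite `ℕ × ℕ` matrices over `F`, realized as the
algebra of all `F`-linear endomorphisms of the free module `⊕_{i ∈ ℕ} F eᵢ`. -/
abbrev EMat (F : Type*) [Field F] := Module.End F (ℕ →₀ F)

/-- The `(i,j)` entry of (the matrix of) an endomorphism `f`. -/
def entry {F : Type*} [Field F] (f : EMat F) (i j : ℕ) : F :=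
  f (Finsupp.single j 1) i

/-- `f` has finitely many nonzero entries in each row. Together with the
automatic column-finiteness this says `f` lies in `E₀`. -/
def RowFinite {F : Type*} [Field F] (f : EMat F) : Prop :=
  ∀ i : ℕ, {j : ℕ | entry f i j ≠ 0}.Finite

/-- `M_∞(F)`: the nonunital algebra of finitary matrices (finitely many
nonzero entries overall), i.e. endomorphisms killing all but finitely many
basis vectors. -/
def Mfin (F : Type*) [Field F] : NonUnitalSubalgebra F (EMat F) where
  carrier := {f | {j : ℕ | f (Finsupp.single j 1) ≠ 0}.Finite}
  zero_mem' := by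
    simp
  add_mem' := by
    intro a b ha hb
    refine ((ha.union hb).subset ?_)
    intro j hj
    simp only [Set.mem_setOf_eq, LinearMap.add_apply] at hj ⊢
    by_contra h
    try push_neg at h
    simp only [Set.mem_union, Set.mem_setOf_eq, not_or, not_not] at h
    rw [h.1, h.2, add_zero] at hj
    exact hj rfl
  mul_mem' := by
    intro a b ha hb
    refine hb.subset ?_
    intro j hj
    simp only [Set.mem_setOf_eq] at hj ⊢
    intro h
    apply hj
    show a (b (Finsupp.single j 1)) = 0
    rw [h]
    simp
  smul_mem' := by
    intro c a ha
    refine ha.subset ?_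
    intro j hj
    simp only [Set.mem_setOf_eq, LinearMap.smul_apply] at hj ⊢
    intro h
    rw [h] at hj
    simp at hj

instance (F : Type*) [Field F] : NonUnitalRing (Mfin F) :=
  NonUnitalSubalgebra.toNonUnitalRing (R := F) (A := EMat F) (Mfin F)

/-- The shift `c = Σ_{i} e_{i+1,i}` (sends basis vector `eᵢ` to `e_{i+1}`). -/
def cSh (F : Type*) [Field F] : EMat F :=
  Finsupp.lsum F fun i => Finsupp.lsingle (i + 1)

/-- The shift `c* = Σ_{i} e_{i,i+1}` (sends `e_{i+1}` to `eᵢ` and `e₀` to `0`). -/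
def cShStar (F : Type*) [Field F] : EMat F :=
  Finsupp.lsum F fun i => if i = 0 then 0 else Finsupp.lsingle (i - 1)

/-
Conjugating the diagonal matrix unit `e_{ii}` (`diagUnit F i`) gives `S e_{ii} T`, whose
`j`-th column is `T_{ij} · S eᵢ`. Since `S` is injective, `S eᵢ ≠ 0`, so this column is
nonzero exactly when `T_{ij} ≠ 0`; finitarity of `S e_{ii} T` therefore says that row `i` of `T` is finite.
Symmetrically, `e_{ii} = S a T` with `a` finitary, so `T e_{ii} S = a` is finitary and the
same argument applies to `S`.
-/

def diagUnit (F : Type*) [Field F] (i : ℕ) : EMat F :=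
  Finsupp.lsingle i ∘ₗ Finsupp.lapply i

theorem diagUnit_mem_Mfin (F : Type*) [Field F] (i : ℕ) : diagUnit F i ∈ Mfin F := by
  refine (Set.finite_singleton i).subset fun j hj => ?_
  by_contra hji
  exact hj (by simp [diagUnit, Ne.symm hji])

theorem mul_diagUnit_mul_apply_single {F : Type*} [Field F] (g f : EMat F) (i j : ℕ) :
    (g * diagUnit F i * f) (Finsupp.single j 1) = entry f i j • g (Finsupp.single i 1) := by
  rw [← map_smul, Finsupp.smul_single, smul_eq_mul, mul_one]
  rfl

theorem rowFinite_of_forall_mul_diagUnit_mul_mem_Mfin {F : Type*} [Field F] {g f : EMat F}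
    (hg : Function.Injective g) (h : ∀ i, g * diagUnit F i * f ∈ Mfin F) : RowFinite f := by
  intro i
  have hgi : g (Finsupp.single i 1) ≠ 0 :=
    (map_ne_zero_iff g hg).mpr (Finsupp.single_ne_zero.mpr one_ne_zero)
  refine (h i).subset fun j hj => ?_
  simpa only [Set.mem_ofPred_eq, mul_diagUnit_mul_apply_single] using smul_ne_zero hj hgi

theorem mul_mul_mem_of_mem_image_conj {M : Type*} [Monoid M] {T S : M} (hTS : T * S = 1)
    {s : Set M} {b : M} (hb : b ∈ (fun a => S * a * T) '' s) : T * b * S ∈ s := by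
  obtain ⟨a, ha, rfl⟩ := hb
  simpa only [mul_assoc, ← mul_assoc T S, hTS, one_mul, mul_one] using ha

theorem conj_Mfin_rowFinite (F : Type*) [Field F] (T S : EMat F)
    (hTS : T * S = 1) (hST : S * T = 1)
    (hconj : (fun a => S * a * T) '' (Mfin F : Set (EMat F)) = (Mfin F : Set (EMat F))) :
    RowFinite T ∧ RowFinite S := by
  refine ⟨rowFinite_of_forall_mul_diagUnit_mul_mem_Mfin
      (LinearMap.injective_of_comp_eq_id S T hTS) fun i => ?_,
    rowFinite_of_forall_mul_diagUnit_mul_mem_Mfin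
      (LinearMap.injective_of_comp_eq_id T S hST) fun i => ?_⟩
  · have hconj_mem : S * diagUnit F i * T ∈ (fun a => S * a * T) '' (Mfin F : Set (EMat F)) :=
      Set.mem_image_of_mem _ (diagUnit_mem_Mfin F i)
    rwa [hconj] at hconj_mem
  · have hdiag_mem : diagUnit F i ∈ (fun a => S * a * T) '' (Mfin F : Set (EMat F)) := by
      rw [hconj]
      exact diagUnit_mem_Mfin F i
    exact mul_mul_mem_of_mem_image_conj hTS hdiag_mem

end
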